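/- Suppose (i) P( ‖Ĥ − H‖₂ ≤ C_H·η and ‖Ŝ − S‖₂ ≤ C_S·η ) ≥ 1 − κ, (ii) E_g < 0 and a† H a ≥ E_g · (a† S a) for every a ∈ ℂ^d, and (iii) inf_{a ≠ 0} E′(η, a) < 0. Let Ê_min(ω) = inf_{a ≠ 0} Ê(ω)(η, a). Then P( E_g ≤ Ê_min ≤ inf_{a ≠ 0} E′(η, a) ) ≥ 1 − κ. -/

import Mathlib

open Matrix
open scoped ComplexOrder

/-- Spectral norm (L2 operator norm) of a complex square matrix. -/
noncomputable def specNorm {d : ℕ} (A : Matrix (Fin d) (Fin d) ℂ) : ℝ :=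
  ‖Matrix.toEuclideanCLM (𝕜 := ℂ) A‖

/-- Rayleigh quotient ⟨A⟩(a) = (a† A a)/(a† a) (real-valued for Hermitian `A`). -/
noncomputable def rq {d : ℕ} (A : Matrix (Fin d) (Fin d) ℂ) (a : Fin d → ℂ) : ℝ :=
  (star a ⬝ᵥ A.mulVec a).re / (star a ⬝ᵥ a).re

lemma quad_eq_inner {d : ℕ} (A : Matrix (Fin d) (Fin d) ℂ) (a : Fin d → ℂ) :
    (star a ⬝ᵥ A.mulVec a) =
      inner ℂ ((WithLp.equiv 2 _).symm a : EuclideanSpace ℂ (Fin d))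
        (Matrix.toEuclideanCLM (𝕜 := ℂ) A ((WithLp.equiv 2 _).symm a)) := by
  show star a ⬝ᵥ A *ᵥ a = (A *ᵥ a) ⬝ᵥ star a
  exact dotProduct_comm _ _

lemma dot_self_eq_normsq {d : ℕ} (a : Fin d → ℂ) :
    (star a ⬝ᵥ a).re = ‖((WithLp.equiv 2 _).symm a : EuclideanSpace ℂ (Fin d))‖ ^ 2 := by
  have h : (star a ⬝ᵥ a) = inner ℂ ((WithLp.equiv 2 _).symm a : EuclideanSpace ℂ (Fin d))
      ((WithLp.equiv 2 _).symm a) := by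
    show _ = a ⬝ᵥ star a
    exact dotProduct_comm _ _
  rw [h, ← RCLike.re_to_complex, inner_self_eq_norm_sq]

lemma dot_self_pos {d : ℕ} {a : Fin d → ℂ} (ha : a ≠ 0) : 0 < (star a ⬝ᵥ a).re := by
  rw [dot_self_eq_normsq]
  have : ((WithLp.equiv 2 _).symm a : EuclideanSpace ℂ (Fin d)) ≠ 0 := by
    simpa using ha
  exact pow_pos (norm_pos_iff.mpr this) 2

lemma quad_abs_le {d : ℕ} (A : Matrix (Fin d) (Fin d) ℂ) (a : Fin d → ℂ) :
    |(star a ⬝ᵥ A.mulVec a).re| ≤ specNorm A * (star a ⬝ᵥ a).re := by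
  set x : EuclideanSpace ℂ (Fin d) := (WithLp.equiv 2 _).symm a with hx
  have h1 := quad_eq_inner A a
  calc |(star a ⬝ᵥ A.mulVec a).re| ≤ ‖(star a ⬝ᵥ A.mulVec a)‖ := Complex.abs_re_le_norm _
    _ = ‖(inner ℂ x (Matrix.toEuclideanCLM (𝕜 := ℂ) A x) : ℂ)‖ := by rw [h1]
    _ ≤ ‖x‖ * ‖Matrix.toEuclideanCLM (𝕜 := ℂ) A x‖ := norm_inner_le_norm _ _
    _ ≤ ‖x‖ * (specNorm A * ‖x‖) := by
        exact mul_le_mul_of_nonneg_left ((Matrix.toEuclideanCLM (𝕜 := ℂ) A).le_opNorm x)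
          (norm_nonneg x)
    _ = specNorm A * (star a ⬝ᵥ a).re := by rw [dot_self_eq_normsq a]; ring

lemma rq_sub_abs {d : ℕ} (A B : Matrix (Fin d) (Fin d) ℂ) {a : Fin d → ℂ} (ha : a ≠ 0) :
    |rq A a - rq B a| ≤ specNorm (A - B) := by
  have hn := dot_self_pos ha
  have hq : rq A a - rq B a = (star a ⬝ᵥ (A - B).mulVec a).re / (star a ⬝ᵥ a).re := by
    rw [rq, rq, div_sub_div_same, Matrix.sub_mulVec, dotProduct_sub, Complex.sub_re]
  rw [hq, abs_div, abs_of_pos hn, div_le_iff₀ hn]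
  exact quad_abs_le _ a
open MeasureTheory ProbabilityTheory
theorem stmt6 {d : ℕ} (hd : 1 ≤ d)
    {Ω : Type*} [MeasureSpace Ω] [IsProbabilityMeasure (ℙ : Measure Ω)]
    (H S : Matrix (Fin d) (Fin d) ℂ)
    (Hhat Shat : Ω → Matrix (Fin d) (Fin d) ℂ)
    (hH : H.IsHermitian) (hS : S.IsHermitian) (hSpd : S.PosDef)
    (hHhat : ∀ ω, (Hhat ω).IsHermitian) (hShat : ∀ ω, (Shat ω).IsHermitian)
    (CH CS η Eg κ : ℝ) (hCH : 0 < CH) (hCS : 0 < CS) (hη : 0 < η)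
    (hκ0 : 0 < κ) (hκ1 : κ < 1)
    (hprob : ℙ {ω | specNorm (Hhat ω - H) ≤ CH * η ∧ specNorm (Shat ω - S) ≤ CS * η}
      ≥ ENNReal.ofReal (1 - κ))
    (hEg : Eg < 0)
    (hHS : ∀ a : Fin d → ℂ, (star a ⬝ᵥ H.mulVec a).re ≥ Eg * (star a ⬝ᵥ S.mulVec a).re)
    (hEp : (⨅ a : {a : Fin d → ℂ // a ≠ 0},
        (rq H a.1 + 2 * CH * η) / (rq S a.1 + 2 * CS * η)) < 0) :
    ℙ {ω | Eg ≤ (⨅ a : {a : Fin d → ℂ // a ≠ 0},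
          (rq (Hhat ω) a.1 + CH * η) / (rq (Shat ω) a.1 + CS * η)) ∧
        (⨅ a : {a : Fin d → ℂ // a ≠ 0},
          (rq (Hhat ω) a.1 + CH * η) / (rq (Shat ω) a.1 + CS * η)) ≤
        (⨅ a : {a : Fin d → ℂ // a ≠ 0},
          (rq H a.1 + 2 * CH * η) / (rq S a.1 + 2 * CS * η))}
      ≥ ENNReal.ofReal (1 - κ) := by
  haveI : Nonempty {a : Fin d → ℂ // a ≠ 0} := by
    refine ⟨⟨fun _ => 1, fun h => ?_⟩⟩
    have := congrFun h ⟨0, hd⟩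
    simp at this
  -- basic per-vector facts
  have hSpos : ∀ a : {a : Fin d → ℂ // a ≠ 0}, 0 < rq S a.1 := fun a =>
    div_pos (hSpd.re_dotProduct_pos a.2) (dot_self_pos a.2)
  have hHSrq : ∀ a : {a : Fin d → ℂ // a ≠ 0}, Eg * rq S a.1 ≤ rq H a.1 := by
    intro a
    have hn := dot_self_pos a.2
    rw [rq, rq, ← mul_div_assoc]
    gcongr
    exact hHS a.1
  have hD'pos : ∀ a : {a : Fin d → ℂ // a ≠ 0}, 0 < rq S a.1 + 2 * CS * η := fun a => by
    have := hSpos a; nlinarith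
  refine le_trans hprob (measure_mono ?_)
  rintro ω ⟨hHw, hSw⟩
  have hdH : ∀ a : {a : Fin d → ℂ // a ≠ 0},
      |rq (Hhat ω) a.1 - rq H a.1| ≤ CH * η := fun a =>
    (rq_sub_abs (Hhat ω) H a.2).trans hHw
  have hdS : ∀ a : {a : Fin d → ℂ // a ≠ 0},
      |rq (Shat ω) a.1 - rq S a.1| ≤ CS * η := fun a =>
    (rq_sub_abs (Shat ω) S a.2).trans hSw
  have hDpos : ∀ a : {a : Fin d → ℂ // a ≠ 0}, 0 < rq (Shat ω) a.1 + CS * η := by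
    intro a
    have h1 := abs_le.mp (hdS a)
    have := hSpos a
    linarith [h1.2]
  have hlow : ∀ a : {a : Fin d → ℂ // a ≠ 0},
      Eg ≤ (rq (Hhat ω) a.1 + CH * η) / (rq (Shat ω) a.1 + CS * η) := by
    intro a
    rw [le_div_iff₀ (hDpos a)]
    have h1 := abs_le.mp (hdS a)
    have h2 := abs_le.mp (hdH a)
    have hge : rq S a.1 ≤ rq (Shat ω) a.1 + CS * η := by linarith [h1.1]
    have hmul : Eg * (rq (Shat ω) a.1 + CS * η) ≤ Eg * rq S a.1 :=
      mul_le_mul_of_nonpos_left hge hEg.le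
    have := hHSrq a
    linarith [h2.1]
  have hBdd : BddBelow (Set.range fun a : {a : Fin d → ℂ // a ≠ 0} =>
      (rq (Hhat ω) a.1 + CH * η) / (rq (Shat ω) a.1 + CS * η)) := by
    refine ⟨Eg, ?_⟩
    rintro x ⟨a, rfl⟩
    exact hlow a
  constructor
  · exact le_ciInf hlow
  · set I' := ⨅ a : {a : Fin d → ℂ // a ≠ 0},
      (rq H a.1 + 2 * CH * η) / (rq S a.1 + 2 * CS * η) with hI'
    refine le_of_forall_pos_le_add fun ε hε => ?_
    set δ := min ε (-I') with hδdef
    have hδ : 0 < δ := lt_min hε (neg_pos.mpr hEp)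
    obtain ⟨a, haE⟩ := exists_lt_of_ciInf_lt (lt_add_of_pos_right I' hδ)
    have hE'neg : (rq H a.1 + 2 * CH * η) / (rq S a.1 + 2 * CS * η) < 0 := by
      have : δ ≤ -I' := min_le_right _ _
      linarith
    have hN'neg : rq H a.1 + 2 * CH * η < 0 := by
      by_contra h
      push_neg at h
      exact absurd hE'neg (not_lt.mpr (div_nonneg h (hD'pos a).le))
    have h1 := abs_le.mp (hdS a)
    have h2 := abs_le.mp (hdH a)
    have hstep : (rq (Hhat ω) a.1 + CH * η) / (rq (Shat ω) a.1 + CS * η) ≤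
        (rq H a.1 + 2 * CH * η) / (rq S a.1 + 2 * CS * η) := by
      have hA : (rq (Hhat ω) a.1 + CH * η) / (rq (Shat ω) a.1 + CS * η) ≤
          (rq H a.1 + 2 * CH * η) / (rq (Shat ω) a.1 + CS * η) := by
        exact (div_le_div_iff_of_pos_right (hDpos a)).mpr (by linarith [h2.2])
      have hB : (rq H a.1 + 2 * CH * η) / (rq (Shat ω) a.1 + CS * η) ≤
          (rq H a.1 + 2 * CH * η) / (rq S a.1 + 2 * CS * η) := by
        rw [div_le_div_iff₀ (hDpos a) (hD'pos a)]
        have hle : rq (Shat ω) a.1 + CS * η ≤ rq S a.1 + 2 * CS * η := by linarith [h1.2]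
        exact mul_le_mul_of_nonpos_left hle hN'neg.le
      linarith
    have hc := ciInf_le hBdd a
    have : δ ≤ ε := min_le_left _ _
    linarith
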